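/- arXiv:2006.04762 — 6 statements merged into one kernel-verified Lean document; each statement's English description precedes it below -/
import Mathlib

section
/- Let n ≥ 1, let F : ℝ^n → ℝ^n and φ : ℝ^n → ℝ be maps that are positive (F(f) is entrywise positive and φ(f) > 0 whenever f is entrywise positive), one-homogeneous (F(c·f) = c·F(f) and φ(c·f) = c·φ(f) for all c > 0 and entrywise positive f), and order-preserving on entrywise positive vectors (u ≤ v entrywise implies F(u) ≤ F(v) entrywise and φ(u) ≤ φ(v)). Let y ∈ ℝ^n be entrywise positive and suppose there exists C > 0 such that F(f) ≤ C·y entrywise for all entrywise positive f with φ(f) = 1. Then for any entrywise positive f⁽⁰⁾, the sequence defined by g⁽ʳ⁾ = F(f⁽ʳ⁾) + y and f⁽ʳ⁺¹⁾ = g⁽ʳ⁾ / φ(g⁽ʳ⁾) converges (in ℝ^n) to a vector f* that is entrywise positive, satisfies φ(f*) = 1, and is the unique fixed point of the map f ↦ (F(f) + y)/φ(F(f)+y) among entrywise positive vectors f with φ(f) = 1. -/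
set_option maxHeartbeats 4000000 in
/-- **Theorem (general convergence of the nonlinear spreading iteration).**
Let `F : ℝ^n → ℝ^n` and `φ : ℝ^n → ℝ` be positive, one-homogeneous and
order-preserving on entrywise positive vectors, let `y` be entrywise positive, and
suppose `F(f) ≤ C·y` for all entrywise positive `f` with `φ(f) = 1`. Then for any
entrywise positive starting point the sequence `g⁽ʳ⁾ = F(f⁽ʳ⁾) + y`,
`f⁽ʳ⁺¹⁾ = g⁽ʳ⁾/φ(g⁽ʳ⁾)` converges to the unique positive fixed point `f*` with
`φ(f*) = 1` of the normalized map. -/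
theorem nonlinear_spreading_general_convergence
    (n : ℕ) (hn : 1 ≤ n)
    (F : (Fin n → ℝ) → (Fin n → ℝ)) (φ : (Fin n → ℝ) → ℝ)
    (hFpos : ∀ f : Fin n → ℝ, (∀ i, 0 < f i) → ∀ i, 0 < F f i)
    (hφpos : ∀ f : Fin n → ℝ, (∀ i, 0 < f i) → 0 < φ f)
    (hFhom : ∀ c : ℝ, 0 < c → ∀ f : Fin n → ℝ, (∀ i, 0 < f i) → F (c • f) = c • F f)
    (hφhom : ∀ c : ℝ, 0 < c → ∀ f : Fin n → ℝ, (∀ i, 0 < f i) → φ (c • f) = c * φ f)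
    (hFmono : ∀ u v : Fin n → ℝ, (∀ i, 0 < u i) → (∀ i, 0 < v i) →
      (∀ i, u i ≤ v i) → ∀ i, F u i ≤ F v i)
    (hφmono : ∀ u v : Fin n → ℝ, (∀ i, 0 < u i) → (∀ i, 0 < v i) →
      (∀ i, u i ≤ v i) → φ u ≤ φ v)
    (y : Fin n → ℝ) (hy : ∀ i, 0 < y i)
    (C : ℝ) (hC : 0 < C)
    (hbound : ∀ f : Fin n → ℝ, (∀ i, 0 < f i) → φ f = 1 → ∀ i, F f i ≤ C * y i)
    (f0 : Fin n → ℝ) (hf0 : ∀ i, 0 < f0 i)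
    (fseq : ℕ → (Fin n → ℝ)) (hseq0 : fseq 0 = f0)
    (hseq : ∀ r : ℕ, fseq (r + 1) = (φ (F (fseq r) + y))⁻¹ • (F (fseq r) + y)) :
    ∃ fstar : Fin n → ℝ,
      (∀ i, 0 < fstar i) ∧ φ fstar = 1 ∧
      (φ (F fstar + y))⁻¹ • (F fstar + y) = fstar ∧
      (∀ g : Fin n → ℝ, (∀ i, 0 < g i) → φ g = 1 →
        (φ (F g + y))⁻¹ • (F g + y) = g → g = fstar) ∧
      Filter.Tendsto fseq Filter.atTop (nhds fstar) := by
  have hn0 : 0 < n := hn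
  have hne : (Finset.univ : Finset (Fin n)).Nonempty := ⟨⟨0, hn0⟩, Finset.mem_univ _⟩
  have hC1 : (0:ℝ) < C + 1 := by linarith
  have hφy : 0 < φ y := hφpos y hy
  -- basic positivity
  have hGpos : ∀ f : Fin n → ℝ, (∀ i, 0 < f i) → ∀ i, 0 < (F f + y) i := fun f hf i =>
    add_pos (hFpos f hf i) (hy i)
  have hφG : ∀ f : Fin n → ℝ, (∀ i, 0 < f i) → 0 < φ (F f + y) := fun f hf =>
    hφpos _ (hGpos f hf)
  set T : (Fin n → ℝ) → (Fin n → ℝ) := fun f => (φ (F f + y))⁻¹ • (F f + y) with hT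
  have hTapp : ∀ f i, T f i = (φ (F f + y))⁻¹ * (F f i + y i) := by
    intro f i; simp [hT, mul_add]
  have hTpos : ∀ f, (∀ i, 0 < f i) → ∀ i, 0 < T f i := by
    intro f hf i
    have h1 := hGpos f hf i
    have h2 := hφG f hf
    rw [hTapp]
    simp only [Pi.add_apply] at h1
    positivity
  have hTnorm : ∀ f, (∀ i, 0 < f i) → φ (T f) = 1 := by
    intro f hf
    have h2 := hφG f hf
    simp only [hT]
    rw [hφhom _ (inv_pos.2 h2) _ (hGpos f hf), inv_mul_cancel₀ (ne_of_gt h2)]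
  have hseq' : ∀ r : ℕ, fseq (r + 1) = T (fseq r) := hseq
  have hposseq : ∀ r, ∀ i, 0 < fseq r i := by
    intro r
    induction r with
    | zero => rw [hseq0]; exact hf0
    | succ r ih => rw [hseq' r]; exact hTpos _ ih
  have hnormseq : ∀ r, φ (fseq (r+1)) = 1 := by
    intro r; rw [hseq' r]; exact hTnorm _ (hposseq r)
  -- oscillation ratio machinery
  set Mx : (Fin n → ℝ) → (Fin n → ℝ) → ℝ :=
    fun u v => Finset.univ.sup' hne fun i => u i / v i with hMx
  set mn : (Fin n → ℝ) → (Fin n → ℝ) → ℝ :=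
    fun u v => Finset.univ.inf' hne fun i => u i / v i with hmn
  have hmn_pos : ∀ u v : Fin n → ℝ, (∀ i, 0 < u i) → (∀ i, 0 < v i) → 0 < mn u v := by
    intro u v hu hv
    simp only [hmn]
    exact (Finset.lt_inf'_iff hne).2 fun i _ => div_pos (hu i) (hv i)
  have hmn_le : ∀ u v : Fin n → ℝ, (∀ i, 0 < v i) → ∀ i, mn u v * v i ≤ u i := by
    intro u v hv i
    have h : mn u v ≤ u i / v i := by
      simp only [hmn]; exact Finset.inf'_le (fun j => u j / v j) (Finset.mem_univ i)
    exact (le_div_iff₀ (hv i)).1 h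
  have hMx_ge : ∀ u v : Fin n → ℝ, (∀ i, 0 < v i) → ∀ i, u i ≤ Mx u v * v i := by
    intro u v hv i
    have h : u i / v i ≤ Mx u v := by
      simp only [hMx]; exact Finset.le_sup' (fun j => u j / v j) (Finset.mem_univ i)
    exact (div_le_iff₀ (hv i)).1 h
  have hmnMx : ∀ u v : Fin n → ℝ, mn u v ≤ Mx u v := by
    intro u v
    simp only [hmn, hMx]
    exact le_trans (Finset.inf'_le (fun j => u j / v j) (Finset.mem_univ (⟨0, hn0⟩ : Fin n)))
      (Finset.le_sup' (fun j => u j / v j) (Finset.mem_univ (⟨0, hn0⟩ : Fin n)))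
  have hmn1 : ∀ u v : Fin n → ℝ, (∀ i, 0 < u i) → (∀ i, 0 < v i) → φ u = 1 → φ v = 1 →
      mn u v ≤ 1 := by
    intro u v hu hv h1 h2
    have hm0 : 0 < mn u v := hmn_pos u v hu hv
    have h3 : φ (mn u v • v) ≤ φ u := by
      refine hφmono _ _ (fun i => by simpa using mul_pos hm0 (hv i)) hu (fun i => ?_)
      simpa using hmn_le u v hv i
    rwa [hφhom _ hm0 _ hv, h1, h2, mul_one] at h3
  have hMx1 : ∀ u v : Fin n → ℝ, (∀ i, 0 < u i) → (∀ i, 0 < v i) → φ u = 1 → φ v = 1 →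
      1 ≤ Mx u v := by
    intro u v hu hv h1 h2
    have hM0 : 0 < Mx u v := lt_of_lt_of_le (hmn_pos u v hu hv) (hmnMx u v)
    have h3 : φ u ≤ φ (Mx u v • v) := by
      refine hφmono _ _ hu (fun i => by simpa using mul_pos hM0 (hv i)) (fun i => ?_)
      simpa using hMx_ge u v hv i
    rwa [hφhom _ hM0 _ hv, h1, h2, mul_one] at h3
  -- the key contraction estimate
  have key : ∀ u v : Fin n → ℝ, (∀ i, 0 < u i) → (∀ i, 0 < v i) → φ u = 1 → φ v = 1 →
      Mx (T u) (T v) / mn (T u) (T v) - 1 ≤ C / (C+1) * (Mx u v / mn u v - 1) := by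
    intro u v hu hv h1 h2
    obtain ⟨m, hm⟩ : ∃ x : ℝ, x = mn u v := ⟨_, rfl⟩
    obtain ⟨M, hM⟩ : ∃ x : ℝ, x = Mx u v := ⟨_, rfl⟩
    rw [← hm, ← hM]
    have hm0 : 0 < m := by rw [hm]; exact hmn_pos u v hu hv
    have hmM : m ≤ M := by rw [hm, hM]; exact hmnMx u v
    have hm1 : m ≤ 1 := by rw [hm]; exact hmn1 u v hu hv h1 h2
    have hM1 : 1 ≤ M := by rw [hM]; exact hMx1 u v hu hv h1 h2
    have hmle : ∀ i, m * v i ≤ u i := by intro i; rw [hm]; exact hmn_le u v hv i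
    have hMge : ∀ i, u i ≤ M * v i := by intro i; rw [hM]; exact hMx_ge u v hv i
    obtain ⟨m', hm'⟩ : ∃ x : ℝ, x = m + (1 - m)/(C+1) := ⟨_, rfl⟩
    obtain ⟨M', hM'⟩ : ∃ x : ℝ, x = M - (M - 1)/(C+1) := ⟨_, rfl⟩
    have hdnn : 0 ≤ (1 - m)/(C+1) := div_nonneg (by linarith) (le_of_lt hC1)
    have hm'0 : 0 < m' := by rw [hm']; linarith
    have hm'm : m ≤ m' := by rw [hm']; linarith
    have hM'm' : m' ≤ M' := by
      have h3 : M' - m' = (M - m) * (C/(C+1)) := by rw [hm', hM']; field_simp; ring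
      have h5 : 0 ≤ M - m := by linarith
      have h4 : 0 ≤ (M - m) * (C/(C+1)) := by positivity
      linarith
    have hM'0 : 0 < M' := lt_of_lt_of_le hm'0 hM'm'
    have hGvC : ∀ i, F v i + y i ≤ (C+1) * y i := by
      intro i; have := hbound v hv h2 i; linarith
    have hGub : ∀ i, F u i + y i ≤ M' * (F v i + y i) := by
      intro i
      have hFu : F u i ≤ M * F v i := by
        have hM0 : (0:ℝ) < M := by linarith
        have h4 := hFmono u (M • v) hu (fun j => by simpa using mul_pos hM0 (hv j))
          (fun j => by simpa using hMge j) i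
        rwa [hFhom M hM0 v hv, Pi.smul_apply, smul_eq_mul] at h4
      have h3 : (M - 1)/(C+1) * (F v i + y i) ≤ (M - 1) * y i := by
        rw [div_mul_eq_mul_div, div_le_iff₀ hC1]
        have h4 : 0 ≤ M - 1 := by linarith
        calc (M-1) * (F v i + y i) ≤ (M-1) * ((C+1) * y i) :=
              mul_le_mul_of_nonneg_left (hGvC i) h4
          _ = (M-1) * y i * (C+1) := by ring
      calc F u i + y i ≤ M * F v i + y i := by linarith
        _ = M * (F v i + y i) - (M - 1) * y i := by ring
        _ ≤ M * (F v i + y i) - (M-1)/(C+1) * (F v i + y i) := by linarith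
        _ = M' * (F v i + y i) := by rw [hM']; ring
    have hGlb : ∀ i, m' * (F v i + y i) ≤ F u i + y i := by
      intro i
      have hFu : m * F v i ≤ F u i := by
        have h4 := hFmono (m • v) u (fun j => by simpa using mul_pos hm0 (hv j)) hu
          (fun j => by simpa using hmle j) i
        rwa [hFhom m hm0 v hv, Pi.smul_apply, smul_eq_mul] at h4
      have h3 : (1 - m)/(C+1) * (F v i + y i) ≤ (1 - m) * y i := by
        rw [div_mul_eq_mul_div, div_le_iff₀ hC1]
        have h4 : 0 ≤ 1 - m := by linarith
        calc (1-m) * (F v i + y i) ≤ (1-m) * ((C+1) * y i) :=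
              mul_le_mul_of_nonneg_left (hGvC i) h4
          _ = (1-m) * y i * (C+1) := by ring
      calc m' * (F v i + y i) = m * (F v i + y i) + (1-m)/(C+1) * (F v i + y i) := by
            rw [hm']; ring
        _ ≤ m * (F v i + y i) + (1 - m) * y i := by linarith
        _ = m * F v i + y i + m * y i - m * y i := by ring
        _ ≤ F u i + y i := by linarith
    have hGv := hGpos v hv
    have hGu := hGpos u hu
    have hφv := hφG v hv
    have hφu := hφG u hu
    simp only [Pi.add_apply] at hGv hGu
    set q := φ (F v + y) / φ (F u + y) with hq
    have hq0 : 0 < q := div_pos hφv hφu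
    have hrat : ∀ i, T u i / T v i = q * ((F u i + y i)/(F v i + y i)) := by
      intro i
      rw [hTapp, hTapp, hq]
      have h5 := hGv i
      have h6 := hGu i
      field_simp
    have hMxT : Mx (T u) (T v) ≤ q * M' := by
      simp only [hMx]
      refine Finset.sup'_le hne _ (fun i _ => ?_)
      rw [hrat i]
      exact mul_le_mul_of_nonneg_left ((div_le_iff₀ (hGv i)).2 (hGub i)) (le_of_lt hq0)
    have hmnT : q * m' ≤ mn (T u) (T v) := by
      simp only [hmn]
      refine Finset.le_inf' hne _ (fun i _ => ?_)
      rw [hrat i]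
      exact mul_le_mul_of_nonneg_left ((le_div_iff₀ (hGv i)).2 (hGlb i)) (le_of_lt hq0)
    have hmnT0 : 0 < mn (T u) (T v) := hmn_pos (T u) (T v) (hTpos u hu) (hTpos v hv)
    have hstep : Mx (T u) (T v) / mn (T u) (T v) ≤ M'/m' := by
      have h7 : Mx (T u) (T v) / mn (T u) (T v) ≤ (q*M')/(q*m') := by
        apply div_le_div₀ (by positivity) hMxT (by positivity) hmnT
      rwa [mul_div_mul_left _ _ (ne_of_gt hq0)] at h7
    have hmne : m ≠ 0 := ne_of_gt hm0
    have hm'ne : m' ≠ 0 := ne_of_gt hm'0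
    have hdiffeq : M' - m' = (M - m) * (C/(C+1)) := by
      rw [hm', hM']; field_simp; ring
    have e1 : M'/m' - 1 = (M - m) * (C/(C+1)) / m' := by
      rw [div_sub_one hm'ne, hdiffeq]
    have e2 : C/(C+1) * (M/m - 1) = (M - m) * (C/(C+1)) / m := by
      rw [div_sub_one hmne]; ring
    have hfin : M'/m' - 1 ≤ C/(C+1) * (M/m - 1) := by
      rw [e1, e2]
      have hnum : 0 ≤ (M - m) * (C/(C+1)) := by
        have h5 : 0 ≤ M - m := by linarith
        positivity
      gcongr
    linarith [hstep, hfin]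
  -- coordinatewise difference bound
  have hdiff : ∀ u v : Fin n → ℝ, (∀ i, 0 < u i) → (∀ i, 0 < v i) → φ u = 1 → φ v = 1 →
      ∀ i, |u i - v i| ≤ (Mx u v / mn u v - 1) * v i := by
    intro u v hu hv h1 h2 i
    obtain ⟨m, hm⟩ : ∃ x : ℝ, x = mn u v := ⟨_, rfl⟩
    obtain ⟨M, hM⟩ : ∃ x : ℝ, x = Mx u v := ⟨_, rfl⟩
    rw [← hm, ← hM]
    have hm0 : 0 < m := by rw [hm]; exact hmn_pos u v hu hv
    have hm1 : m ≤ 1 := by rw [hm]; exact hmn1 u v hu hv h1 h2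
    have hM1 : 1 ≤ M := by rw [hM]; exact hMx1 u v hu hv h1 h2
    have hlb : m * v i ≤ u i := by rw [hm]; exact hmn_le u v hv i
    have hub : u i ≤ M * v i := by rw [hM]; exact hMx_ge u v hv i
    have hR1 : M ≤ M / m := by
      rw [le_div_iff₀ hm0]; nlinarith
    have hR2 : 2 - m ≤ M / m := by
      rw [le_div_iff₀ hm0]; nlinarith [sq_nonneg (1 - m)]
    rw [abs_sub_le_iff]
    constructor
    · nlinarith [hv i]
    · nlinarith [hv i]
  -- uniform bounds along the sequence
  have hubseq : ∀ r : ℕ, ∀ i, fseq (r+2) i ≤ (C+1)/φ y * y i := by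
    intro r i
    have hg := hposseq (r+1)
    have hgn := hnormseq r
    have hφylow : φ y ≤ φ (F (fseq (r+1)) + y) := by
      refine hφmono y _ hy (hGpos _ hg) (fun j => ?_)
      have := hFpos _ hg j
      simp only [Pi.add_apply]
      linarith
    have hGub2 : F (fseq (r+1)) i + y i ≤ (C+1) * y i := by
      have := hbound _ hg hgn i; linarith
    have e : fseq (r+2) = T (fseq (r+1)) := hseq' (r+1)
    rw [e, hTapp]
    have hφGg := hφG _ hg
    calc (φ (F (fseq (r+1)) + y))⁻¹ * (F (fseq (r+1)) i + y i)
        ≤ (φ y)⁻¹ * ((C+1) * y i) := by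
          apply mul_le_mul (inv_anti₀ hφy hφylow) hGub2
          · have := hFpos _ hg i; linarith [hy i]
          · positivity
      _ = (C+1)/φ y * y i := by field_simp
  have hlbseq : ∀ r : ℕ, ∀ i, ((C+1) * φ y)⁻¹ * y i ≤ fseq (r+2) i := by
    intro r i
    have hg := hposseq (r+1)
    have hgn := hnormseq r
    have hφyub : φ (F (fseq (r+1)) + y) ≤ (C+1) * φ y := by
      have h4 : φ (F (fseq (r+1)) + y) ≤ φ ((C+1) • y) := by
        refine hφmono _ _ (hGpos _ hg) (fun j => by simpa using mul_pos hC1 (hy j)) (fun j => ?_)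
        have := hbound _ hg hgn j
        simp only [Pi.add_apply, Pi.smul_apply, smul_eq_mul]
        linarith
      rwa [hφhom _ hC1 _ hy] at h4
    have e : fseq (r+2) = T (fseq (r+1)) := hseq' (r+1)
    rw [e, hTapp]
    have hφGg := hφG _ hg
    calc ((C+1) * φ y)⁻¹ * y i ≤ (φ (F (fseq (r+1)) + y))⁻¹ * y i := by
          apply mul_le_mul_of_nonneg_right (inv_anti₀ hφGg hφyub) (le_of_lt (hy i))
      _ ≤ (φ (F (fseq (r+1)) + y))⁻¹ * (F (fseq (r+1)) i + y i) := by
          have := hFpos _ hg i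
          apply mul_le_mul_of_nonneg_left (by linarith) (le_of_lt (inv_pos.2 hφGg))
  -- geometric decay
  have hκ1 : C/(C+1) < 1 := (div_lt_one hC1).2 (by linarith)
  have hκ0 : 0 ≤ C/(C+1) := le_of_lt (div_pos hC hC1)
  have hDnn : ∀ s : ℕ, 0 ≤ Mx (fseq (s+1)) (fseq s) / mn (fseq (s+1)) (fseq s) - 1 := by
    intro s
    have hm0 := hmn_pos (fseq (s+1)) (fseq s) (hposseq (s+1)) (hposseq s)
    have h1 : (1:ℝ) ≤ Mx (fseq (s+1)) (fseq s) / mn (fseq (s+1)) (fseq s) := by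
      rw [le_div_iff₀ hm0, one_mul]; exact hmnMx _ _
    linarith
  have hDgeom : ∀ s : ℕ, Mx (fseq (s+3)) (fseq (s+2)) / mn (fseq (s+3)) (fseq (s+2)) - 1 ≤
      (C/(C+1))^s * (Mx (fseq 3) (fseq 2) / mn (fseq 3) (fseq 2) - 1) := by
    intro s
    induction s with
    | zero => simp
    | succ s ih =>
      have hstep : Mx (fseq (s+4)) (fseq (s+3)) / mn (fseq (s+4)) (fseq (s+3)) - 1 ≤
          C/(C+1) * (Mx (fseq (s+3)) (fseq (s+2)) / mn (fseq (s+3)) (fseq (s+2)) - 1) := by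
        have h1 : fseq (s+4) = T (fseq (s+3)) := hseq' (s+3)
        have h2 : fseq (s+3) = T (fseq (s+2)) := hseq' (s+2)
        have hk := key (fseq (s+3)) (fseq (s+2)) (hposseq _) (hposseq _)
          (hnormseq (s+2)) (hnormseq (s+1))
        rw [← h1, ← h2] at hk
        exact hk
      calc Mx (fseq (s+4)) (fseq (s+3)) / mn (fseq (s+4)) (fseq (s+3)) - 1
          ≤ C/(C+1) * (Mx (fseq (s+3)) (fseq (s+2)) / mn (fseq (s+3)) (fseq (s+2)) - 1) := hstep
        _ ≤ C/(C+1) * ((C/(C+1))^s * (Mx (fseq 3) (fseq 2) / mn (fseq 3) (fseq 2) - 1)) :=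
            mul_le_mul_of_nonneg_left ih hκ0
        _ = (C/(C+1))^(s+1) * (Mx (fseq 3) (fseq 2) / mn (fseq 3) (fseq 2) - 1) := by ring
  -- Cauchy via geometric bound
  obtain ⟨ymax, hymax⟩ : ∃ x : ℝ, x = Finset.univ.sup' hne y := ⟨_, rfl⟩
  have hymax0 : 0 < ymax := by
    rw [hymax]
    exact lt_of_lt_of_le (hy ⟨0, hn0⟩) (Finset.le_sup' _ (Finset.mem_univ _))
  have hymaxi : ∀ i, y i ≤ ymax := by
    intro i; rw [hymax]; exact Finset.le_sup' _ (Finset.mem_univ i)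
  obtain ⟨B, hB⟩ : ∃ x : ℝ, x = (C+1)/φ y * ymax := ⟨_, rfl⟩
  have hB0 : 0 < B := by rw [hB]; positivity
  have hseqB : ∀ s : ℕ, ∀ i, fseq (s+2) i ≤ B := by
    intro s i
    rw [hB]
    refine le_trans (hubseq s i) ?_
    have h0 : 0 ≤ (C+1)/φ y := by positivity
    exact mul_le_mul_of_nonneg_left (hymaxi i) h0
  obtain ⟨D2, hD2⟩ : ∃ x : ℝ, x = Mx (fseq 3) (fseq 2) / mn (fseq 3) (fseq 2) - 1 := ⟨_, rfl⟩
  have hD2nn : 0 ≤ D2 := by rw [hD2]; exact hDnn 2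
  have hdistgeom : ∀ s : ℕ, dist (fseq (s+2)) (fseq (s+3)) ≤ (D2 * B) * (C/(C+1))^s := by
    intro s
    have hnn : 0 ≤ (D2 * B) * (C/(C+1))^s := by positivity
    rw [dist_pi_le_iff hnn]
    intro i
    rw [Real.dist_eq, abs_sub_comm]
    have h1 := hdiff (fseq (s+3)) (fseq (s+2)) (hposseq _) (hposseq _)
      (hnormseq (s+2)) (hnormseq (s+1)) i
    have h2 : fseq (s+2) i ≤ B := hseqB s i
    have h3 := hDgeom s
    rw [← hD2] at h3
    have h4 := hDnn (s+2)
    calc |fseq (s+3) i - fseq (s+2) i|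
        ≤ (Mx (fseq (s+3)) (fseq (s+2)) / mn (fseq (s+3)) (fseq (s+2)) - 1) * fseq (s+2) i := h1
      _ ≤ ((C/(C+1))^s * D2) * B := by
          apply mul_le_mul h3 h2 (le_of_lt (hposseq _ i))
          positivity
      _ = (D2 * B) * (C/(C+1))^s := by ring
  have hcauchy : CauchySeq (fun s => fseq (s+2)) :=
    cauchySeq_of_le_geometric (C/(C+1)) (D2 * B) hκ1 hdistgeom
  obtain ⟨fstar, hfs⟩ := cauchySeq_tendsto_of_complete hcauchy
  have htend : Filter.Tendsto fseq Filter.atTop (nhds fstar) :=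
    (Filter.tendsto_add_atTop_iff_nat 2).1 hfs
  have hcoord : ∀ i, Filter.Tendsto (fun s => fseq (s+2) i) Filter.atTop (nhds (fstar i)) :=
    fun i => tendsto_pi_nhds.1 hfs i
  have hfl : ∀ i, ((C+1) * φ y)⁻¹ * y i ≤ fstar i := fun i =>
    ge_of_tendsto (hcoord i) (Filter.Eventually.of_forall fun s => hlbseq s i)
  have hfstarpos : ∀ i, 0 < fstar i := by
    intro i
    refine lt_of_lt_of_le ?_ (hfl i)
    have := hy i
    positivity
  -- continuity of monotone homogeneous functionals along positive limits
  have cont_gen : ∀ ψ : (Fin n → ℝ) → ℝ,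
      (∀ u v : Fin n → ℝ, (∀ i, 0 < u i) → (∀ i, 0 < v i) → (∀ i, u i ≤ v i) → ψ u ≤ ψ v) →
      (∀ c : ℝ, 0 < c → ∀ f : Fin n → ℝ, (∀ i, 0 < f i) → ψ (c • f) = c * ψ f) →
      ∀ w : Fin n → ℝ, (∀ i, 0 < w i) → 0 < ψ w →
      ∀ g : ℕ → (Fin n → ℝ), (∀ s i, 0 < g s i) →
      Filter.Tendsto g Filter.atTop (nhds w) →
      Filter.Tendsto (fun s => ψ (g s)) Filter.atTop (nhds (ψ w)) := by
    intro ψ hmono hhom w hw hψw g hg hgw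
    rw [Metric.tendsto_atTop]
    intro ε hε
    obtain ⟨wlo, hwlo⟩ : ∃ x : ℝ, x = Finset.univ.inf' hne w := ⟨_, rfl⟩
    have hwlo0 : 0 < wlo := by
      rw [hwlo]; exact (Finset.lt_inf'_iff hne).2 fun i _ => hw i
    have hwloi : ∀ i, wlo ≤ w i := by
      intro i; rw [hwlo]; exact Finset.inf'_le _ (Finset.mem_univ i)
    obtain ⟨δ, hδ⟩ : ∃ x : ℝ, x = min (1/2) (ε / (2 * ψ w)) := ⟨_, rfl⟩
    have hδ0 : 0 < δ := by rw [hδ]; exact lt_min (by norm_num) (by positivity)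
    have hδ2 : δ ≤ 1/2 := by rw [hδ]; exact min_le_left _ _
    have hδ3 : δ * ψ w ≤ ε/2 := by
      have h : δ ≤ ε/(2 * ψ w) := by rw [hδ]; exact min_le_right _ _
      have h2ψ : (0:ℝ) < 2 * ψ w := by positivity
      rw [le_div_iff₀ h2ψ] at h
      nlinarith
    obtain ⟨N, hN⟩ := (Metric.tendsto_atTop.1 hgw) (δ * wlo) (mul_pos hδ0 hwlo0)
    refine ⟨N, fun s hs => ?_⟩
    have hbnd : ∀ i, |g s i - w i| ≤ δ * w i := by
      intro i
      have h1 : dist (g s i) (w i) ≤ dist (g s) w := dist_le_pi_dist _ _ i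
      have h2 := hN s hs
      have h3 := hwloi i
      rw [Real.dist_eq] at h1
      nlinarith [le_of_lt (lt_of_le_of_lt h1 h2)]
    have hup : ψ (g s) ≤ (1 + δ) * ψ w := by
      have h4 : ψ (g s) ≤ ψ ((1+δ) • w) := by
        refine hmono _ _ (hg s) (fun i => by simpa using mul_pos (by linarith) (hw i))
          (fun i => ?_)
        have h5 := hbnd i
        rw [abs_le] at h5
        simp only [Pi.smul_apply, smul_eq_mul]
        nlinarith [hw i]
      rwa [hhom _ (by linarith) _ hw] at h4
    have hdn : (1 - δ) * ψ w ≤ ψ (g s) := by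
      have h4 : ψ ((1-δ) • w) ≤ ψ (g s) := by
        refine hmono _ _ (fun i => by simpa using mul_pos (by linarith : (0:ℝ) < 1-δ) (hw i))
          (hg s) (fun i => ?_)
        have h5 := hbnd i
        rw [abs_le] at h5
        simp only [Pi.smul_apply, smul_eq_mul]
        nlinarith [hw i]
      rwa [hhom _ (by linarith : (0:ℝ) < 1-δ) _ hw] at h4
    rw [Real.dist_eq, abs_lt]
    constructor <;> nlinarith
  -- φ fstar = 1
  have hφlim := cont_gen φ hφmono hφhom fstar hfstarpos (hφpos _ hfstarpos)
    (fun s => fseq (s+2)) (fun s => hposseq (s+2)) hfs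
  have hφstar : φ fstar = 1 := by
    have h1 : Filter.Tendsto (fun _ : ℕ => (1:ℝ)) Filter.atTop (nhds (φ fstar)) :=
      hφlim.congr (fun s => hnormseq (s+1))
    exact tendsto_nhds_unique h1 tendsto_const_nhds
  -- fixed point
  have hFlim : Filter.Tendsto (fun s => F (fseq (s+2))) Filter.atTop (nhds (F fstar)) := by
    rw [tendsto_pi_nhds]
    intro i
    exact cont_gen (fun f => F f i) (fun u v hu hv h => hFmono u v hu hv h i)
      (fun c hc f hf => by show F (c • f) i = c * F f i; rw [hFhom c hc f hf]; simp)
      fstar hfstarpos (hFpos _ hfstarpos i) _ (fun s => hposseq (s+2)) hfs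
  have hGlim : Filter.Tendsto (fun s => F (fseq (s+2)) + y) Filter.atTop (nhds (F fstar + y)) :=
    hFlim.add tendsto_const_nhds
  have hφGlim := cont_gen φ hφmono hφhom (F fstar + y) (hGpos _ hfstarpos) (hφG _ hfstarpos)
    (fun s => F (fseq (s+2)) + y) (fun s i => hGpos _ (hposseq (s+2)) i) hGlim
  have hTlim : Filter.Tendsto (fun s => fseq (s+3)) Filter.atTop (nhds (T fstar)) := by
    have h1 := (hφGlim.inv₀ (ne_of_gt (hφG _ hfstarpos))).smul hGlim
    exact Filter.Tendsto.congr (fun s => (hseq' (s+2)).symm) h1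
  have hfix : T fstar = fstar :=
    tendsto_nhds_unique hTlim ((Filter.tendsto_add_atTop_iff_nat 3).2 htend)
  -- uniqueness
  have huniq : ∀ g : Fin n → ℝ, (∀ i, 0 < g i) → φ g = 1 → T g = g → g = fstar := by
    intro g hg hgn hgfix
    have hk := key g fstar hg hfstarpos hgn hφstar
    rw [hgfix, hfix] at hk
    have hm0 := hmn_pos g fstar hg hfstarpos
    have hmM := hmnMx g fstar
    have hR1 : (1:ℝ) ≤ Mx g fstar / mn g fstar := by
      rw [le_div_iff₀ hm0, one_mul]; exact hmM
    have hReq : Mx g fstar / mn g fstar = 1 := by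
      nlinarith [hκ1, hk, hR1]
    have hMeq : Mx g fstar = mn g fstar := by
      rw [div_eq_one_iff_eq (ne_of_gt hm0)] at hReq
      exact hReq
    have hm1 := hmn1 g fstar hg hfstarpos hgn hφstar
    have hM1 := hMx1 g fstar hg hfstarpos hgn hφstar
    have hmone : mn g fstar = 1 := le_antisymm hm1 (by rw [← hMeq]; exact hM1)
    funext i
    have h1 := hmn_le g fstar hfstarpos i
    have h2 := hMx_ge g fstar hfstarpos i
    rw [hmone, one_mul] at h1
    rw [hMeq, hmone, one_mul] at h2
    linarith
  exact ⟨fstar, hfstarpos, hφstar, hfix, fun g hg hgn hgfix => huniq g hg hgn hgfix, htend⟩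
end

section
/- For all real numbers a, b, c > 0, log((a+c)/(b+c)) ≤ (a/(a+c))·log(a/b). -/
/-- **Lemma (logarithm inequality).**
For all real numbers `a, b, c > 0`, `log((a+c)/(b+c)) ≤ (a/(a+c))·log(a/b)`. -/
theorem log_ratio_shift_le (a b c : ℝ) (ha : 0 < a) (hb : 0 < b) (hc : 0 < c) :
    Real.log ((a + c) / (b + c)) ≤ (a / (a + c)) * Real.log (a / b) := by
  have hac : (0:ℝ) < a + c := by linarith
  have hbc : (0:ℝ) < b + c := by linarith
  -- log x ≥ 1 - 1/x for positive x
  have low : ∀ x : ℝ, 0 < x → 1 - x⁻¹ ≤ Real.log x := by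
    intro x hx
    have h := Real.log_le_sub_one_of_pos (x := x⁻¹) (by positivity)
    rw [Real.log_inv] at h
    linarith
  have h1 : 1 - (b * (a + c)) / (a * (b + c)) ≤
      Real.log a + Real.log (b + c) - Real.log b - Real.log (a + c) := by
    have := low ((a * (b + c)) / (b * (a + c))) (by positivity)
    rw [Real.log_div (by positivity) (by positivity), Real.log_mul (ne_of_gt ha) (ne_of_gt hbc),
      Real.log_mul (ne_of_gt hb) (ne_of_gt hac)] at this
    have hinv : ((a * (b + c)) / (b * (a + c)))⁻¹ = (b * (a + c)) / (a * (b + c)) := by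
      field_simp
    rw [hinv] at this
    linarith
  have h2 : 1 - (a + c) / (b + c) ≤ Real.log (b + c) - Real.log (a + c) := by
    have := low ((b + c) / (a + c)) (by positivity)
    rw [Real.log_div (ne_of_gt hbc) (ne_of_gt hac)] at this
    have hinv : ((b + c) / (a + c))⁻¹ = (a + c) / (b + c) := by
      field_simp
    rw [hinv] at this
    linarith
  rw [Real.log_div (ne_of_gt hac) (ne_of_gt hbc), Real.log_div (ne_of_gt ha) (ne_of_gt hb),
    div_mul_eq_mul_div, le_div_iff₀ hac]
  -- goal: (log(a+c) - log(b+c)) * (a+c) ≤ a * (log a - log b)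
  have e1 : (b * (a + c)) / (a * (b + c)) * (a * (b + c)) = b * (a + c) := by
    field_simp
  have e2 : (a + c) / (b + c) * (b + c) = a + c := by field_simp
  nlinarith [mul_le_mul_of_nonneg_left h1 ha.le, mul_le_mul_of_nonneg_left h2 hc.le,
    mul_pos ha hbc, mul_pos hc hbc]
end

section
/- Let 𝒜 ∈ ℝ^{n×n×n} be a tensor with δ_i = Σ_{jk} 𝒜_{ijk}, let D_H = Diag(δ), let B_{jk} = Σ_i 𝒜_{ijk}, and let σ : ℝ² → ℝ be any function. Then for every f ∈ ℝ^n: fᵀ(D_H f − 𝒜σ(f)) = Σ_{ijk} 𝒜_{ijk}·(f_i − σ(f_j,f_k)/2)² − (1/4)·Σ_{jk} B_{jk}·σ(f_j,f_k)², where (𝒜σ(f))_i = Σ_{jk} 𝒜_{ijk} σ(f_j, f_k). -/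
/-- **Lemma (tensor energy identity).**
For a tensor `𝒜 ∈ ℝ^{n×n×n}` with degrees `δ_i = Σ_{jk} 𝒜_{ijk}`,
`B_{jk} = Σ_i 𝒜_{ijk}`, and any `σ : ℝ² → ℝ` and `f ∈ ℝ^n`:
`fᵀ(D_H f − 𝒜σ(f)) = Σ_{ijk} 𝒜_{ijk}(f_i − σ(f_j,f_k)/2)²
                      − (1/4)·Σ_{jk} B_{jk} σ(f_j,f_k)²`. -/
theorem tensor_energy_identity
    (n : ℕ) (𝒜 : Fin n → Fin n → Fin n → ℝ) (σ : ℝ → ℝ → ℝ) (f : Fin n → ℝ) :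
    ∑ i, f i * ((∑ j, ∑ k, 𝒜 i j k) * f i - ∑ j, ∑ k, 𝒜 i j k * σ (f j) (f k))
      = (∑ i, ∑ j, ∑ k, 𝒜 i j k * (f i - σ (f j) (f k) / 2) ^ 2)
        - (1 / 4) * ∑ j, ∑ k, (∑ i, 𝒜 i j k) * (σ (f j) (f k)) ^ 2 := by
  have h2 : (1 / 4 : ℝ) * ∑ j, ∑ k, (∑ i, 𝒜 i j k) * (σ (f j) (f k)) ^ 2
      = ∑ i, ∑ j, ∑ k, (1 / 4 : ℝ) * (𝒜 i j k * (σ (f j) (f k)) ^ 2) := by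
    rw [Finset.mul_sum]
    have step : ∀ j : Fin n, (1/4 : ℝ) * ∑ k, (∑ i, 𝒜 i j k) * (σ (f j) (f k)) ^ 2
        = ∑ i, ∑ k, (1/4 : ℝ) * (𝒜 i j k * (σ (f j) (f k)) ^ 2) := by
      intro j
      rw [Finset.mul_sum, Finset.sum_comm]
      refine Finset.sum_congr rfl fun k _ => ?_
      rw [Finset.sum_mul, Finset.mul_sum]
    rw [Finset.sum_congr rfl fun j _ => step j, Finset.sum_comm]
  rw [h2, ← Finset.sum_sub_distrib]
  refine Finset.sum_congr rfl fun i _ => ?_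
  simp only [mul_sub, Finset.mul_sum, Finset.sum_mul, ← Finset.sum_sub_distrib]
  refine Finset.sum_congr rfl fun j _ => ?_
  refine Finset.sum_congr rfl fun k _ => ?_
  ring
end

section
/- Let A ∈ ℝ^{n×n} be symmetric with nonnegative entries and strictly positive row sums d_i = Σ_j A_{ij}, let S = D_G^{-1/2} A D_G^{-1/2}, let 0 ≤ β < 1, γ = 1 − β, and let Y ∈ ℝ^{n×c} be entrywise nonnegative. Then the iterates F^{(r+1)} = β·S·F^{(r)} + γ·Y with F^{(0)} = Y converge to F* = γ·(I − βS)^{-1}·Y, the unique solution of (I − βS)F = γY, and F* is entrywise nonnegative. -/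
/-!
With `P = D⁻¹ A` the random-walk matrix, `S = D^{1/2} P D^{-1/2}` is similar to a row-stochastic
matrix, and row-stochastic matrices have `ℓ^∞` operator norm at most one. Hence `‖β P‖ < 1`, so the
Neumann series inverts `1 - β P`, and with it its conjugate `1 - β S`, and `(β S)^r → 0`. Since
`F⁽ʳ⁾ - F* = (β S)^r (Y - F*)`, the iterates converge to `F*`; they are entrywise nonnegative,
hence so is their limit.
-/

open Filter Topology

theorem isUnit_one_sub_conj {M : Type*} [Ring M] (u : Mˣ) {t : M} (ht : IsUnit (1 - t)) :
    IsUnit (1 - u * t * ↑u⁻¹) := by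
  have hconj : 1 - u * t * ↑u⁻¹ = u * (1 - t) * ↑u⁻¹ := by
    rw [mul_sub, sub_mul, mul_one, Units.mul_inv]
  rw [hconj]
  exact (u.isUnit.mul ht).mul u⁻¹.isUnit

theorem tendsto_conj_pow_nhds_zero {M : Type*} [MonoidWithZero M] [TopologicalSpace M]
    [ContinuousMul M] (u : Mˣ) {t : M} (ht : Tendsto (t ^ ·) atTop (𝓝 0)) :
    Tendsto (fun r : ℕ => (u * t * ↑u⁻¹) ^ r) atTop (𝓝 0) := by
  simp_rw [Units.conj_pow]
  simpa using (ht.const_mul (u : M)).mul_const (↑u⁻¹ : M)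

namespace Matrix

variable {n : Type*} [Fintype n] [DecidableEq n]

section LinftyOp

open scoped Matrix.Norms.Operator

theorem linfty_opNorm_le_one_of_mem_rowStochastic {P : Matrix n n ℝ}
    (hP : P ∈ rowStochastic ℝ n) : ‖P‖ ≤ 1 := by
  rw [linfty_opNorm_def, NNReal.coe_le_one, Finset.sup_le_iff]
  intro i _
  rw [← NNReal.coe_le_one, NNReal.coe_sum]
  simp only [coe_nnnorm, Real.norm_of_nonneg (nonneg_of_mem_rowStochastic hP),
    sum_row_of_mem_rowStochastic hP i, le_refl]

theorem norm_smul_lt_one_of_mem_rowStochastic {P : Matrix n n ℝ} (hP : P ∈ rowStochastic ℝ n)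
    {β : ℝ} (hβ : |β| < 1) : ‖β • P‖ < 1 :=
  calc ‖β • P‖ = |β| * ‖P‖ := by rw [norm_smul, Real.norm_eq_abs]
    _ ≤ |β| * 1 := by gcongr; exact linfty_opNorm_le_one_of_mem_rowStochastic hP
    _ < 1 := by rwa [mul_one]

theorem isUnit_one_sub_smul_of_mem_rowStochastic {P : Matrix n n ℝ}
    (hP : P ∈ rowStochastic ℝ n) {β : ℝ} (hβ : |β| < 1) : IsUnit (1 - β • P) :=
  (Units.oneSub _ (norm_smul_lt_one_of_mem_rowStochastic hP hβ)).isUnit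

theorem tendsto_smul_pow_of_mem_rowStochastic {P : Matrix n n ℝ}
    (hP : P ∈ rowStochastic ℝ n) {β : ℝ} (hβ : |β| < 1) :
    Tendsto (fun r : ℕ => (β • P) ^ r) atTop (𝓝 0) :=
  tendsto_pow_atTop_nhds_zero_of_norm_lt_one (norm_smul_lt_one_of_mem_rowStochastic hP hβ)

end LinftyOp

theorem diagonal_inv_mul_mem_rowStochastic {A : Matrix n n ℝ} (hA : ∀ i j, 0 ≤ A i j)
    {d : n → ℝ} (hd : ∀ i, d i = ∑ j, A i j) (hdpos : ∀ i, 0 < d i) :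
    diagonal d⁻¹ * A ∈ rowStochastic ℝ n := by
  refine mem_rowStochastic_iff_sum.2 ⟨fun i j => ?_, fun i => ?_⟩
  · rw [diagonal_mul]
    exact mul_nonneg (inv_nonneg.2 (hdpos i).le) (hA i j)
  · simp only [diagonal_mul, Pi.inv_apply, ← Finset.mul_sum, ← hd i]
    exact inv_mul_cancel₀ (hdpos i).ne'

theorem exists_units_conj_diagonal_inv_mul {A S : Matrix n n ℝ} {d : n → ℝ}
    (hdpos : ∀ i, 0 < d i) (hS : ∀ i j, S i j = A i j / (√(d i) * √(d j))) :
    ∃ u : (Matrix n n ℝ)ˣ,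
      S = (u : Matrix n n ℝ) * (diagonal d⁻¹ * A) * (↑u⁻¹ : Matrix n n ℝ) := by
  have hsqrt : ∀ i, √(d i) ≠ 0 := fun i => (Real.sqrt_pos.2 (hdpos i)).ne'
  let u : (Matrix n n ℝ)ˣ :=
    { val := diagonal fun i => √(d i)
      inv := diagonal fun i => (√(d i))⁻¹
      val_inv := by simp [hsqrt]
      inv_val := by simp [hsqrt] }
  refine ⟨u, ext fun i j => ?_⟩
  simp only [u, hS, Units.inv_mk, mul_diagonal, diagonal_mul, Pi.inv_apply]
  have hinv : (d i)⁻¹ = (√(d i))⁻¹ ^ 2 := by rw [inv_pow, Real.sq_sqrt (hdpos i).le]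
  rw [hinv]
  field_simp [hsqrt i, hsqrt j]

theorem tendsto_of_affine_recurrence {m p α : Type*} [Fintype m] [DecidableEq m] [Ring α]
    [TopologicalSpace α] [IsTopologicalRing α] {T : Matrix m m α} {B L : Matrix m p α}
    {F : ℕ → Matrix m p α} (hT : Tendsto (T ^ ·) atTop (𝓝 0)) (hL : (1 - T) * L = B)
    (hF : ∀ r, F (r + 1) = T * F r + B) : Tendsto F atTop (𝓝 L) := by
  have hF_sub : ∀ r, F r = T ^ r * (F 0 - L) + L := by
    intro r
    induction r with
    | zero => simp
    | succ r ih =>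
      rw [hF, ih, ← hL, pow_succ', Matrix.mul_add, Matrix.mul_assoc, Matrix.sub_mul,
        Matrix.one_mul]
      abel
  have hcont : Continuous fun M : Matrix m m α => M * (F 0 - L) + L :=
    (continuous_id.matrix_mul continuous_const).add continuous_const
  have := (hcont.tendsto 0).comp hT
  rw [Matrix.zero_mul, zero_add] at this
  exact this.congr fun r => (hF_sub r).symm

theorem nonneg_of_affine_recurrence {m p α : Type*} [Fintype m] [Semiring α] [PartialOrder α]
    [IsOrderedRing α] {T : Matrix m m α} {B : Matrix m p α} {F : ℕ → Matrix m p α}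
    (hT : ∀ i j, 0 ≤ T i j) (hB : ∀ i l, 0 ≤ B i l) (hF0 : ∀ i l, 0 ≤ F 0 i l)
    (hF : ∀ r, F (r + 1) = T * F r + B) (r : ℕ) : ∀ i l, 0 ≤ F r i l := by
  induction r with
  | zero => exact hF0
  | succ r ih =>
    intro i l
    rw [hF, add_apply, mul_apply]
    exact add_nonneg (Finset.sum_nonneg fun k _ => mul_nonneg (hT i k) (ih k l)) (hB i l)

end Matrix

theorem standard_label_spreading_convergence_general
    (n c : ℕ)
    (A : Matrix (Fin n) (Fin n) ℝ) (hA : ∀ i j, 0 ≤ A i j)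
    (d : Fin n → ℝ) (hd : ∀ i, d i = ∑ j, A i j) (hdpos : ∀ i, 0 < d i)
    (S : Matrix (Fin n) (Fin n) ℝ)
    (hS : ∀ i j, S i j = A i j / (Real.sqrt (d i) * Real.sqrt (d j)))
    (β γ : ℝ) (hβ0 : 0 ≤ β) (hβ1 : β < 1) (hγ : γ = 1 - β)
    (Y : Matrix (Fin n) (Fin c) ℝ) (hY : ∀ i l, 0 ≤ Y i l)
    (Fseq : ℕ → Matrix (Fin n) (Fin c) ℝ) (hF0 : Fseq 0 = Y)
    (hFrec : ∀ r : ℕ, Fseq (r + 1) = β • (S * Fseq r) + γ • Y) :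
    IsUnit (1 - β • S) ∧
    ∃ Fstar : Matrix (Fin n) (Fin c) ℝ,
      Fstar = γ • ((1 - β • S)⁻¹ * Y) ∧
      (1 - β • S) * Fstar = γ • Y ∧
      (∀ G : Matrix (Fin n) (Fin c) ℝ, (1 - β • S) * G = γ • Y → G = Fstar) ∧
      (∀ i l, 0 ≤ Fstar i l) ∧
      Filter.Tendsto Fseq Filter.atTop (nhds Fstar) := by
  have hP := Matrix.diagonal_inv_mul_mem_rowStochastic hA hd hdpos
  obtain ⟨u, hSu⟩ := Matrix.exists_units_conj_diagonal_inv_mul hdpos hS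
  have hβ : |β| < 1 := by rwa [abs_of_nonneg hβ0]
  have hβS :
      β • S = u * (β • (Matrix.diagonal d⁻¹ * A)) * (↑u⁻¹ : Matrix (Fin n) (Fin n) ℝ) := by
    rw [hSu, Matrix.mul_smul, Matrix.smul_mul]
  have hunit : IsUnit (1 - β • S) :=
    hβS ▸ isUnit_one_sub_conj u (Matrix.isUnit_one_sub_smul_of_mem_rowStochastic hP hβ)
  have hdet := (Matrix.isUnit_iff_isUnit_det _).1 hunit
  have hsolve : (1 - β • S) * (γ • ((1 - β • S)⁻¹ * Y)) = γ • Y := by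
    rw [Matrix.mul_smul, Matrix.mul_nonsing_inv_cancel_left _ _ hdet]
  have hrec : ∀ r, Fseq (r + 1) = β • S * Fseq r + γ • Y := fun r => by
    rw [hFrec, Matrix.smul_mul]
  have hlim := Matrix.tendsto_of_affine_recurrence
    (hβS ▸ tendsto_conj_pow_nhds_zero u (Matrix.tendsto_smul_pow_of_mem_rowStochastic hP hβ))
    hsolve hrec
  refine ⟨hunit, _, rfl, hsolve, fun G hG => by
    rw [← Matrix.nonsing_inv_mul_cancel_left _ G hdet, hG, Matrix.mul_smul],
    fun i l => ?_, hlim⟩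
  have hβSnn : ∀ i j, 0 ≤ (β • S) i j := fun i j => by
    rw [Matrix.smul_apply, hS]
    exact mul_nonneg hβ0 (div_nonneg (hA i j) (by positivity))
  have hγYnn : ∀ i l, 0 ≤ (γ • Y) i l := fun i l =>
    mul_nonneg (by linarith) (hY i l)
  have hFnn := Matrix.nonneg_of_affine_recurrence hβSnn hγYnn (hF0 ▸ hY) hrec
  exact ge_of_tendsto' ((((continuous_apply l).comp (continuous_apply i)).tendsto _).comp hlim)
    fun r => hFnn r i l

/-- **Lemma (convergence of standard label spreading).**
With `S = D_G^{-1/2} A D_G^{-1/2}` the normalized adjacency matrix, `0 ≤ β < 1`,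
`γ = 1 − β`, and `Y` entrywise nonnegative, the iterates
`F⁽ʳ⁺¹⁾ = β S F⁽ʳ⁾ + γ Y` with `F⁽⁰⁾ = Y` converge to
`F* = γ (I − βS)⁻¹ Y`, the unique solution of `(I − βS)F = γY`, and `F*` is
entrywise nonnegative. -/
theorem standard_label_spreading_convergence
    (n c : ℕ)
    (A : Matrix (Fin n) (Fin n) ℝ) (hAsymm : A.IsSymm) (hA : ∀ i j, 0 ≤ A i j)
    (d : Fin n → ℝ) (hd : ∀ i, d i = ∑ j, A i j) (hdpos : ∀ i, 0 < d i)
    (S : Matrix (Fin n) (Fin n) ℝ)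
    (hS : ∀ i j, S i j = A i j / (Real.sqrt (d i) * Real.sqrt (d j)))
    (β γ : ℝ) (hβ0 : 0 ≤ β) (hβ1 : β < 1) (hγ : γ = 1 - β)
    (Y : Matrix (Fin n) (Fin c) ℝ) (hY : ∀ i l, 0 ≤ Y i l)
    (Fseq : ℕ → Matrix (Fin n) (Fin c) ℝ) (hF0 : Fseq 0 = Y)
    (hFrec : ∀ r : ℕ, Fseq (r + 1) = β • (S * Fseq r) + γ • Y) :
    IsUnit (1 - β • S) ∧
    ∃ Fstar : Matrix (Fin n) (Fin c) ℝ,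
      Fstar = γ • ((1 - β • S)⁻¹ * Y) ∧
      (1 - β • S) * Fstar = γ • Y ∧
      (∀ G : Matrix (Fin n) (Fin c) ℝ, (1 - β • S) * G = γ • Y → G = Fstar) ∧
      (∀ i l, 0 ≤ Fstar i l) ∧
      Filter.Tendsto Fseq Filter.atTop (nhds Fstar) :=
  standard_label_spreading_convergence_general n c A hA d hd hdpos S hS β γ hβ0 hβ1 hγ Y hY Fseq hF0
    hFrec
end

section
/- Let F : ℝ^n → ℝ^n and φ : ℝ^n → ℝ be positive, one-homogeneous, and order-preserving on entrywise positive vectors, let y ∈ ℝ^n be entrywise positive, and suppose C > 0 satisfies F(f) ≤ C·y entrywise for all entrywise positive f with φ(f) = 1. Define G(f) = F(f) + y. Then for all entrywise positive u, v with φ(u) = φ(v) = 1: m(G(u)/G(v)) ≥ (C·m(u/v) + 1)/(C + 1) and M(G(u)/G(v)) ≤ (C·M(u/v) + 1)/(C + 1). -/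
/-- **Lemma (ratio bounds for the shifted map `G(f) = F(f) + y`).**
If `F`, `φ` are positive, one-homogeneous and order-preserving on entrywise positive
vectors, `y` is entrywise positive, and `F(f) ≤ C·y` entrywise for all entrywise
positive `f` with `φ(f) = 1`, then for all entrywise positive `u, v` with
`φ(u) = φ(v) = 1`:
`m(G(u)/G(v)) ≥ (C·m(u/v) + 1)/(C + 1)` and
`M(G(u)/G(v)) ≤ (C·M(u/v) + 1)/(C + 1)`. -/
theorem shifted_map_ratio_bounds
    (n : ℕ) (hn : 0 < n)
    (F : (Fin n → ℝ) → (Fin n → ℝ)) (φ : (Fin n → ℝ) → ℝ)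
    (hFpos : ∀ f : Fin n → ℝ, (∀ i, 0 < f i) → ∀ i, 0 < F f i)
    (hφpos : ∀ f : Fin n → ℝ, (∀ i, 0 < f i) → 0 < φ f)
    (hFhom : ∀ c : ℝ, 0 < c → ∀ f : Fin n → ℝ, (∀ i, 0 < f i) → F (c • f) = c • F f)
    (hφhom : ∀ c : ℝ, 0 < c → ∀ f : Fin n → ℝ, (∀ i, 0 < f i) → φ (c • f) = c * φ f)
    (hFmono : ∀ u v : Fin n → ℝ, (∀ i, 0 < u i) → (∀ i, 0 < v i) →
      (∀ i, u i ≤ v i) → ∀ i, F u i ≤ F v i)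
    (hφmono : ∀ u v : Fin n → ℝ, (∀ i, 0 < u i) → (∀ i, 0 < v i) →
      (∀ i, u i ≤ v i) → φ u ≤ φ v)
    (y : Fin n → ℝ) (hy : ∀ i, 0 < y i)
    (C : ℝ) (hC : 0 < C)
    (hbound : ∀ f : Fin n → ℝ, (∀ i, 0 < f i) → φ f = 1 → ∀ i, F f i ≤ C * y i)
    (G : (Fin n → ℝ) → (Fin n → ℝ)) (hG : ∀ f, G f = F f + y)
    (u v : Fin n → ℝ) (hu : ∀ i, 0 < u i) (hv : ∀ i, 0 < v i)
    (hφu : φ u = 1) (hφv : φ v = 1) :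
    (C * Finset.univ.inf' (Finset.univ_nonempty_iff.mpr (Fin.pos_iff_nonempty.mp hn))
        (fun i => u i / v i) + 1) / (C + 1)
      ≤ Finset.univ.inf' (Finset.univ_nonempty_iff.mpr (Fin.pos_iff_nonempty.mp hn))
        (fun i => G u i / G v i) ∧
    Finset.univ.sup' (Finset.univ_nonempty_iff.mpr (Fin.pos_iff_nonempty.mp hn))
        (fun i => G u i / G v i)
      ≤ (C * Finset.univ.sup' (Finset.univ_nonempty_iff.mpr (Fin.pos_iff_nonempty.mp hn))
        (fun i => u i / v i) + 1) / (C + 1) := by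

  have ne : (Finset.univ : Finset (Fin n)).Nonempty :=
    Finset.univ_nonempty_iff.mpr (Fin.pos_iff_nonempty.mp hn)
  set m := Finset.univ.inf' (Finset.univ_nonempty_iff.mpr (Fin.pos_iff_nonempty.mp hn))
      (fun i => u i / v i) with hm_def
  set M := Finset.univ.sup' (Finset.univ_nonempty_iff.mpr (Fin.pos_iff_nonempty.mp hn))
      (fun i => u i / v i) with hM_def
  have hm_le : ∀ i, m ≤ u i / v i := fun i => Finset.inf'_le _ (Finset.mem_univ i)
  have hM_ge : ∀ i, u i / v i ≤ M := fun i => by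
    rw [hM_def]; exact Finset.le_sup' (fun j => u j / v j) (Finset.mem_univ i)
  have hm_pos : 0 < m := by
    rw [hm_def, Finset.lt_inf'_iff]
    exact fun i _ => div_pos (hu i) (hv i)
  have hM_pos : 0 < M := lt_of_lt_of_le hm_pos (le_trans (hm_le ⟨0, hn⟩) (hM_ge ⟨0, hn⟩))
  have hmv : ∀ i, m * v i ≤ u i := fun i => (le_div_iff₀ (hv i)).mp (hm_le i)
  have hMv : ∀ i, u i ≤ M * v i := fun i => (div_le_iff₀ (hv i)).mp (hM_ge i)
  have hmvpos : ∀ i, 0 < (m • v) i := fun i => mul_pos hm_pos (hv i)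
  have hMvpos : ∀ i, 0 < (M • v) i := fun i => mul_pos hM_pos (hv i)
  have hm1 : m ≤ 1 := by
    have h := hφmono (m • v) u hmvpos hu (fun i => hmv i)
    rwa [hφhom m hm_pos v hv, hφv, mul_one, hφu] at h
  have hM1 : 1 ≤ M := by
    have h := hφmono u (M • v) hu hMvpos (fun i => hMv i)
    rwa [hφhom M hM_pos v hv, hφv, mul_one, hφu] at h
  have hFu_lo : ∀ i, m * F v i ≤ F u i := by
    intro i
    have h := hFmono (m • v) u hmvpos hu (fun i => hmv i) i
    rwa [hFhom m hm_pos v hv] at h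
  have hFu_hi : ∀ i, F u i ≤ M * F v i := by
    intro i
    have h := hFmono u (M • v) hu hMvpos (fun i => hMv i) i
    rwa [hFhom M hM_pos v hv] at h
  have hFvC : ∀ i, F v i ≤ C * y i := hbound v hv hφv
  have hFv_pos : ∀ i, 0 < F v i := hFpos v hv
  have hFu_pos : ∀ i, 0 < F u i := hFpos u hu
  have key_lo : ∀ i, (C * m + 1) / (C + 1) ≤ G u i / G v i := by
    intro i
    rw [hG, hG]
    simp only [Pi.add_apply]
    have ht0 := hFv_pos i
    have hyi := hy i
    rw [div_le_div_iff₀ (by linarith) (by linarith)]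
    nlinarith [mul_nonneg (sub_nonneg.mpr hm1) (sub_nonneg.mpr (hFvC i)),
      mul_le_mul_of_nonneg_left (hFu_lo i) hC.le, hFu_lo i]
  have key_hi : ∀ i, G u i / G v i ≤ (C * M + 1) / (C + 1) := by
    intro i
    rw [hG, hG]
    simp only [Pi.add_apply]
    have ht0 := hFv_pos i
    have hyi := hy i
    rw [div_le_div_iff₀ (by linarith) (by linarith)]
    nlinarith [mul_nonneg (sub_nonneg.mpr hM1) (sub_nonneg.mpr (hFvC i)),
      mul_le_mul_of_nonneg_left (hFu_hi i) hC.le, hFu_hi i]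
  constructor
  · exact Finset.le_inf' _ _ (fun i _ => key_lo i)
  · exact Finset.sup'_le _ _ (fun i _ => key_hi i)
end

section
/- Let F : ℝ^n → ℝ^n and φ : ℝ^n → ℝ be positive, one-homogeneous, and order-preserving on entrywise positive vectors, let y ∈ ℝ^n be entrywise positive, let C > 0 satisfy F(f) ≤ C·y entrywise for all entrywise positive f with φ(f) = 1, and set G(f) = F(f) + y and δ = 1/C. Then for all entrywise positive u ≠ v with φ(u) = φ(v) = 1, the Hilbert distance d(u,v) = log(M(u/v)/m(u/v)) satisfies d(G(u), G(v)) ≤ (M(u/v)/(M(u/v) + δ))·d(u,v) < d(u,v); in particular, the normalized map f ↦ G(f)/φ(G(f)) is a strict contraction of the Hilbert distance on the slice {f entrywise positive : φ(f) = 1}. -/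
/-!
Sandwich `u` between `m(u/v) • v` and `M(u/v) • v`. Since `F` is homogeneous and order
preserving, the same sandwich holds for `F u` and `F v`; adding `y ≥ δ F(v)` improves it to
`(m + δ)/(1 + δ) • G v ≤ G u ≤ (M + δ)/(1 + δ) • G v`, so `d(G u, G v) ≤ log ((M + δ)/(m + δ))`.
On the slice `φ = 1` we have `m ≤ 1 ≤ M`, and `x ↦ M log x - (M + δ) log (x + δ)` is
increasing on `(0, M]`, which bounds this logarithm by `M/(M + δ) · log (M/m)`.
-/

/-- The Hilbert (projective) distance between two entrywise positive vectors:
`d(u,v) = log(M(u/v)/m(u/v))` with `M(u/v) = max_i u_i/v_i`, `m(u/v) = min_i u_i/v_i`. -/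
noncomputable def hilbertDist (n : ℕ) (hn : 0 < n) (u v : Fin n → ℝ) : ℝ :=
  Real.log
    ((Finset.univ.sup' (Finset.univ_nonempty_iff.mpr (Fin.pos_iff_nonempty.mp hn))
        (fun i => u i / v i)) /
     (Finset.univ.inf' (Finset.univ_nonempty_iff.mpr (Fin.pos_iff_nonempty.mp hn))
        (fun i => u i / v i)))

open Finset Real

theorem log_add_div_add_le_mul_log_div {m M δ : ℝ} (hδ : 0 ≤ δ) (hm : 0 < m) (hmM : m ≤ M) :
    log ((M + δ) / (m + δ)) ≤ M / (M + δ) * log (M / m) := by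
  set g : ℝ → ℝ := fun x => M * log x - (M + δ) * log (x + δ)
  -- `g' x = δ (M - x) / (x (x + δ)) ≥ 0` on `(0, M]`
  have hg : MonotoneOn g (Set.Ioc 0 M) := by
    have hderiv : ∀ x, 0 < x →
        HasDerivAt g (M * x⁻¹ - (M + δ) * ((x + δ)⁻¹ * 1)) x := fun x hx =>
      ((hasDerivAt_log hx.ne').const_mul M).sub
        (((hasDerivAt_log (by positivity)).comp x ((hasDerivAt_id x).add_const δ)).const_mul _)
    refine monotoneOn_of_hasDerivWithinAt_nonneg (convex_Ioc 0 M)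
      (fun x hx => (hderiv x hx.1).continuousAt.continuousWithinAt)
      (fun x hx => (hderiv x (interior_subset hx).1).hasDerivWithinAt) fun x hx => ?_
    rw [interior_Ioc] at hx
    have hx0 : 0 < x := hx.1
    rw [mul_one, sub_nonneg, ← div_eq_mul_inv, ← div_eq_mul_inv,
      div_le_div_iff₀ (by positivity) hx0]
    nlinarith [mul_nonneg hδ (sub_nonneg.mpr hx.2.le)]
  have hgmM : g m ≤ g M := hg ⟨hm, hmM⟩ ⟨hm.trans_le hmM, le_rfl⟩ hmM
  have hM : 0 < M := hm.trans_le hmM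
  rw [log_div (by positivity) (by positivity), log_div hM.ne' hm.ne', div_mul_eq_mul_div,
    le_div_iff₀ (by positivity)]
  simp only [g] at hgmM
  linarith

-- `(t + δ) (b + y) - (1 + δ) (t b + y) = (t - 1) (y - δ b)`
theorem add_le_div_mul_add {a b y t δ : ℝ} (hδ : 0 ≤ δ) (ht : 1 ≤ t) (ha : a ≤ t * b)
    (hb : δ * b ≤ y) : a + y ≤ (t + δ) / (1 + δ) * (b + y) := by
  rw [div_mul_eq_mul_div, le_div_iff₀ (by positivity)]
  nlinarith [mul_nonneg (sub_nonneg.mpr ht) (sub_nonneg.mpr hb)]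

theorem div_mul_add_le_add {a b y t δ : ℝ} (hδ : 0 ≤ δ) (ht : t ≤ 1) (ha : t * b ≤ a)
    (hb : δ * b ≤ y) : (t + δ) / (1 + δ) * (b + y) ≤ a + y := by
  rw [div_mul_eq_mul_div, div_le_iff₀ (by positivity)]
  nlinarith [mul_nonneg (sub_nonneg.mpr ht) (sub_nonneg.mpr hb)]

namespace HilbertMetric

variable {n : ℕ} (hn : 0 < n)

noncomputable def maxRatio (u v : Fin n → ℝ) : ℝ :=
  univ.sup' (univ_nonempty_iff.mpr (Fin.pos_iff_nonempty.mp hn)) fun i => u i / v i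

noncomputable def minRatio (u v : Fin n → ℝ) : ℝ :=
  univ.inf' (univ_nonempty_iff.mpr (Fin.pos_iff_nonempty.mp hn)) fun i => u i / v i

variable {u v : Fin n → ℝ}

theorem le_maxRatio_mul (hv : ∀ i, 0 < v i) (i : Fin n) : u i ≤ maxRatio hn u v * v i :=
  (div_le_iff₀ (hv i)).mp (le_sup' (fun i => u i / v i) (mem_univ i))

theorem minRatio_mul_le (hv : ∀ i, 0 < v i) (i : Fin n) : minRatio hn u v * v i ≤ u i :=
  (le_div_iff₀ (hv i)).mp (inf'_le (fun i => u i / v i) (mem_univ i))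

theorem maxRatio_le {K : ℝ} (hv : ∀ i, 0 < v i) (h : ∀ i, u i ≤ K * v i) :
    maxRatio hn u v ≤ K :=
  sup'_le _ _ fun i _ => (div_le_iff₀ (hv i)).mpr (h i)

theorem le_minRatio {k : ℝ} (hv : ∀ i, 0 < v i) (h : ∀ i, k * v i ≤ u i) :
    k ≤ minRatio hn u v :=
  le_inf' _ _ fun i _ => (le_div_iff₀ (hv i)).mpr (h i)

theorem minRatio_pos (hu : ∀ i, 0 < u i) (hv : ∀ i, 0 < v i) : 0 < minRatio hn u v :=
  (lt_inf'_iff _).mpr fun i _ => div_pos (hu i) (hv i)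

theorem minRatio_le_maxRatio : minRatio hn u v ≤ maxRatio hn u v :=
  (inf'_le _ (mem_univ ⟨0, hn⟩)).trans (le_sup' (fun i => u i / v i) (mem_univ _))

theorem hilbertDist_le_log_div {k K : ℝ} (hv : ∀ i, 0 < v i) (hk : 0 < k)
    (hlow : ∀ i, k * v i ≤ u i) (hup : ∀ i, u i ≤ K * v i) :
    hilbertDist n hn u v ≤ log (K / k) := by
  have hm : k ≤ minRatio hn u v := le_minRatio hn hv hlow
  have hM : maxRatio hn u v ≤ K := maxRatio_le hn hv hup
  have hm0 : 0 < minRatio hn u v := hk.trans_le hm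
  have hM0 : 0 < maxRatio hn u v := hm0.trans_le (minRatio_le_maxRatio hn)
  exact log_le_log (div_pos hM0 hm0) (div_le_div₀ (hM0.le.trans hM) hM hk hm)

theorem hilbertDist_pos (hu : ∀ i, 0 < u i) (hv : ∀ i, 0 < v i)
    (h : minRatio hn u v < maxRatio hn u v) : 0 < hilbertDist n hn u v :=
  log_pos ((one_lt_div (minRatio_pos hn hu hv)).mpr h)

theorem hilbertDist_smul_smul {a b : ℝ} (ha : 0 < a) (hb : 0 < b) (u v : Fin n → ℝ) :
    hilbertDist n hn (a • u) (b • v) = hilbertDist n hn u v := by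
  have hk : 0 < a / b := div_pos ha hb
  have hratio : (fun i => (a • u) i / (b • v) i) = fun i => a / b * (u i / v i) := by
    funext i
    simp only [Pi.smul_apply, smul_eq_mul, mul_div_mul_comm]
  have hinf : ∀ f : Fin n → ℝ, ∀ hs : (univ : Finset (Fin n)).Nonempty,
      univ.inf' hs (fun i => a / b * f i) = a / b * univ.inf' hs f := fun f hs =>
    (map_finset_inf' (OrderIso.mulLeft₀ _ hk) hs f).symm
  simp only [hilbertDist, hratio, ← mul₀_sup' hk.le, hinf, mul_div_mul_left _ _ hk.ne']

section Homogeneous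

variable {β : Type*} [SMul ℝ β] [Preorder β] {T : (Fin n → ℝ) → β}

theorem map_le_maxRatio_smul
    (hhom : ∀ c : ℝ, 0 < c → ∀ f : Fin n → ℝ, (∀ i, 0 < f i) → T (c • f) = c • T f)
    (hmono : ∀ u v : Fin n → ℝ, (∀ i, 0 < u i) → (∀ i, 0 < v i) → u ≤ v → T u ≤ T v)
    (hu : ∀ i, 0 < u i) (hv : ∀ i, 0 < v i) :
    T u ≤ maxRatio hn u v • T v := by
  have hM : 0 < maxRatio hn u v := (minRatio_pos hn hu hv).trans_le (minRatio_le_maxRatio hn)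
  rw [← hhom _ hM v hv]
  exact hmono _ _ hu (fun i => mul_pos hM (hv i)) (le_maxRatio_mul hn hv)

theorem minRatio_smul_le_map
    (hhom : ∀ c : ℝ, 0 < c → ∀ f : Fin n → ℝ, (∀ i, 0 < f i) → T (c • f) = c • T f)
    (hmono : ∀ u v : Fin n → ℝ, (∀ i, 0 < u i) → (∀ i, 0 < v i) → u ≤ v → T u ≤ T v)
    (hu : ∀ i, 0 < u i) (hv : ∀ i, 0 < v i) :
    minRatio hn u v • T v ≤ T u := by
  have hm : 0 < minRatio hn u v := minRatio_pos hn hu hv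
  rw [← hhom _ hm v hv]
  exact hmono _ _ (fun i => mul_pos hm (hv i)) hu (minRatio_mul_le hn hv)

end Homogeneous

theorem one_le_maxRatio {φ : (Fin n → ℝ) → ℝ}
    (hφhom : ∀ c : ℝ, 0 < c → ∀ f : Fin n → ℝ, (∀ i, 0 < f i) → φ (c • f) = c * φ f)
    (hφmono : ∀ u v : Fin n → ℝ, (∀ i, 0 < u i) → (∀ i, 0 < v i) → (∀ i, u i ≤ v i) → φ u ≤ φ v)
    (hu : ∀ i, 0 < u i) (hv : ∀ i, 0 < v i) (hφu : φ u = 1) (hφv : φ v = 1) :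
    1 ≤ maxRatio hn u v := by
  simpa [hφu, hφv] using map_le_maxRatio_smul hn hφhom hφmono hu hv

theorem minRatio_le_one {φ : (Fin n → ℝ) → ℝ}
    (hφhom : ∀ c : ℝ, 0 < c → ∀ f : Fin n → ℝ, (∀ i, 0 < f i) → φ (c • f) = c * φ f)
    (hφmono : ∀ u v : Fin n → ℝ, (∀ i, 0 < u i) → (∀ i, 0 < v i) → (∀ i, u i ≤ v i) → φ u ≤ φ v)
    (hu : ∀ i, 0 < u i) (hv : ∀ i, 0 < v i) (hφu : φ u = 1) (hφv : φ v = 1) :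
    minRatio hn u v ≤ 1 := by
  simpa [hφu, hφv] using minRatio_smul_le_map hn hφhom hφmono hu hv

theorem minRatio_lt_maxRatio (hv : ∀ i, 0 < v i) (hm : minRatio hn u v ≤ 1)
    (hM : 1 ≤ maxRatio hn u v) (huv : u ≠ v) : minRatio hn u v < maxRatio hn u v := by
  by_contra! h
  refine huv (funext fun i => le_antisymm ?_ ?_)
  · simpa [show maxRatio hn u v = 1 by linarith] using le_maxRatio_mul hn (u := u) hv i
  · simpa [show minRatio hn u v = 1 by linarith] using minRatio_mul_le hn (u := u) hv i

theorem hilbertDist_map_add_le {F : (Fin n → ℝ) → (Fin n → ℝ)}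
    (hFhom : ∀ c : ℝ, 0 < c → ∀ f : Fin n → ℝ, (∀ i, 0 < f i) → F (c • f) = c • F f)
    (hFmono : ∀ u v : Fin n → ℝ, (∀ i, 0 < u i) → (∀ i, 0 < v i) →
      (∀ i, u i ≤ v i) → ∀ i, F u i ≤ F v i)
    {y : Fin n → ℝ} {δ : ℝ} (hδ : 0 ≤ δ) (hFy : ∀ i, δ * F v i ≤ y i)
    (hu : ∀ i, 0 < u i) (hv : ∀ i, 0 < v i) (hGv : ∀ i, 0 < F v i + y i)
    (hm : minRatio hn u v ≤ 1) (hM : 1 ≤ maxRatio hn u v) :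
    hilbertDist n hn (F u + y) (F v + y)
      ≤ log ((maxRatio hn u v + δ) / (minRatio hn u v + δ)) := by
  have hm0 := minRatio_pos hn hu hv
  rw [← div_div_div_cancel_right₀ (by positivity : (1 + δ) ≠ 0)]
  refine hilbertDist_le_log_div hn hGv (by positivity) (fun i => ?_) (fun i => ?_)
  · exact div_mul_add_le_add hδ hm (minRatio_smul_le_map hn hFhom hFmono hu hv i) (hFy i)
  · exact add_le_div_mul_add hδ hM (map_le_maxRatio_smul hn hFhom hFmono hu hv i) (hFy i)

end HilbertMetric

open HilbertMetric

/-- **Lemma (the shifted map is a strict Hilbert-metric contraction).**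
If `F`, `φ` are positive, one-homogeneous and order-preserving on entrywise positive
vectors, `y` is entrywise positive, `F(f) ≤ C·y` on the slice `{f > 0 : φ(f) = 1}`,
`G(f) = F(f) + y` and `δ = 1/C`, then for entrywise positive `u ≠ v` on the slice,
`d(G(u), G(v)) ≤ (M(u/v)/(M(u/v) + δ))·d(u,v) < d(u,v)`; in particular the
normalized map `f ↦ G(f)/φ(G(f))` strictly contracts the Hilbert distance on the
slice. -/
theorem shifted_map_hilbert_contraction
    (n : ℕ) (hn : 0 < n)
    (F : (Fin n → ℝ) → (Fin n → ℝ)) (φ : (Fin n → ℝ) → ℝ)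
    (hFpos : ∀ f : Fin n → ℝ, (∀ i, 0 < f i) → ∀ i, 0 < F f i)
    (hφpos : ∀ f : Fin n → ℝ, (∀ i, 0 < f i) → 0 < φ f)
    (hFhom : ∀ c : ℝ, 0 < c → ∀ f : Fin n → ℝ, (∀ i, 0 < f i) → F (c • f) = c • F f)
    (hφhom : ∀ c : ℝ, 0 < c → ∀ f : Fin n → ℝ, (∀ i, 0 < f i) → φ (c • f) = c * φ f)
    (hFmono : ∀ u v : Fin n → ℝ, (∀ i, 0 < u i) → (∀ i, 0 < v i) →
      (∀ i, u i ≤ v i) → ∀ i, F u i ≤ F v i)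
    (hφmono : ∀ u v : Fin n → ℝ, (∀ i, 0 < u i) → (∀ i, 0 < v i) →
      (∀ i, u i ≤ v i) → φ u ≤ φ v)
    (y : Fin n → ℝ) (hy : ∀ i, 0 < y i)
    (C : ℝ) (hC : 0 < C)
    (hbound : ∀ f : Fin n → ℝ, (∀ i, 0 < f i) → φ f = 1 → ∀ i, F f i ≤ C * y i)
    (G : (Fin n → ℝ) → (Fin n → ℝ)) (hG : ∀ f, G f = F f + y)
    (u v : Fin n → ℝ) (hu : ∀ i, 0 < u i) (hv : ∀ i, 0 < v i)
    (hφu : φ u = 1) (hφv : φ v = 1) (huv : u ≠ v) :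
    hilbertDist n hn (G u) (G v)
      ≤ (Finset.univ.sup' (Finset.univ_nonempty_iff.mpr (Fin.pos_iff_nonempty.mp hn))
            (fun i => u i / v i) /
          (Finset.univ.sup' (Finset.univ_nonempty_iff.mpr (Fin.pos_iff_nonempty.mp hn))
            (fun i => u i / v i) + 1 / C)) * hilbertDist n hn u v ∧
    hilbertDist n hn (G u) (G v) < hilbertDist n hn u v ∧
    hilbertDist n hn ((φ (G u))⁻¹ • G u) ((φ (G v))⁻¹ • G v) < hilbertDist n hn u v := by
  obtain rfl : G = fun f => F f + y := funext hG
  have hGpos : ∀ f : Fin n → ℝ, (∀ i, 0 < f i) → ∀ i, 0 < (F f + y) i :=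
    fun f hf i => add_pos (hFpos f hf i) (hy i)
  have hFy : ∀ i, 1 / C * F v i ≤ y i := fun i => by
    rw [one_div, inv_mul_le_iff₀ hC]
    exact hbound v hv hφv i
  have hm := minRatio_le_one hn hφhom hφmono hu hv hφu hφv
  have hM := one_le_maxRatio hn hφhom hφmono hu hv hφu hφv
  have hcontract : hilbertDist n hn (F u + y) (F v + y)
      ≤ maxRatio hn u v / (maxRatio hn u v + 1 / C) * hilbertDist n hn u v :=
    (hilbertDist_map_add_le hn hFhom hFmono (by positivity) hFy hu hv (hGpos v hv) hm hM).trans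
      (log_add_div_add_le_mul_log_div (by positivity) (minRatio_pos hn hu hv)
        (minRatio_le_maxRatio hn))
  have hfactor : maxRatio hn u v / (maxRatio hn u v + 1 / C) < 1 :=
    (div_lt_one (by positivity)).mpr (lt_add_of_pos_right _ (by positivity))
  have hstrict : hilbertDist n hn (F u + y) (F v + y) < hilbertDist n hn u v :=
    hcontract.trans_lt (mul_lt_of_lt_one_left
      (hilbertDist_pos hn hu hv (minRatio_lt_maxRatio hn hv hm hM huv)) hfactor)
  exact ⟨hcontract, hstrict, (hilbertDist_smul_smul hn (inv_pos.mpr (hφpos _ (hGpos u hu)))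
    (inv_pos.mpr (hφpos _ (hGpos v hv))) _ _).trans_lt hstrict⟩
end
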